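/- arXiv:1710.06367 — 3 statements merged into one kernel-verified Lean document; each statement's English description precedes it below -/
import Mathlib

section
/- Let H be a directed m-uniform hypergraph on n vertices with m even, let A_H⁺ be its out-adjacency hypermatrix, and let B be the order-m dimension-n hypermatrix with b_{i₁…i_m} = |T_e|/m! if i₁,…,i_m are distinct and {v_{i₁},…,v_{i_m}} = T_e ∪ H_e for some edge e ∈ E, and b_{i₁…i_m} = 0 otherwise. Then the maximum Z-eigenvalue of A_H⁺ is less than or equal to the maximum Z-eigenvalue of B. -/
open Finset

/-- `(A x^{m-1})_i` for a real order-`m` dimension-`n` hypermatrix `A`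
and a real vector `x`. -/
noncomputable def hmApply {m n : ℕ} (hm : 0 < m) (A : (Fin m → Fin n) → ℝ)
    (x : Fin n → ℝ) (i : Fin n) : ℝ :=
  ∑ f ∈ Finset.univ.filter (fun f : Fin m → Fin n => f ⟨0, hm⟩ = i),
    A f * ∏ j ∈ Finset.univ.filter (fun j : Fin m => j ≠ ⟨0, hm⟩), x (f j)

/-- `(A x^{m-1})_i` for a real hypermatrix `A` and a complex vector `x`. -/
noncomputable def hmApplyC {m n : ℕ} (hm : 0 < m) (A : (Fin m → Fin n) → ℝ)
    (x : Fin n → ℂ) (i : Fin n) : ℂ :=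
  ∑ f ∈ Finset.univ.filter (fun f : Fin m → Fin n => f ⟨0, hm⟩ = i),
    (A f : ℂ) * ∏ j ∈ Finset.univ.filter (fun j : Fin m => j ≠ ⟨0, hm⟩), x (f j)

/-- `A x^m`, the homogeneous form associated with a hypermatrix. -/
noncomputable def formEval {m n : ℕ} (A : (Fin m → Fin n) → ℝ) (x : Fin n → ℝ) : ℝ :=
  ∑ f : Fin m → Fin n, A f * ∏ j, x (f j)

/-- `lam ∈ ℂ` is an eigenvalue of `A`:  there is a nonzero complex vector `x` with
`(A x^{m-1})_i = lam * x_i^{m-1}` for all `i`. -/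
def IsEigenvalue {m n : ℕ} (hm : 0 < m) (A : (Fin m → Fin n) → ℝ) (lam : ℂ) : Prop :=
  ∃ x : Fin n → ℂ, x ≠ 0 ∧ ∀ i, hmApplyC hm A x i = lam * (x i) ^ (m - 1)

/-- `(lam, x)` is an H-eigenpair of `A` (both real). -/
def IsHEigenpair {m n : ℕ} (hm : 0 < m) (A : (Fin m → Fin n) → ℝ)
    (lam : ℝ) (x : Fin n → ℝ) : Prop :=
  x ≠ 0 ∧ ∀ i, hmApply hm A x i = lam * (x i) ^ (m - 1)

/-- `(lam, x)` is a Z-eigenpair of `A`:  `A x^{m-1} = lam x` and `∑ x_i² = 1`. -/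
def IsZEigenpair {m n : ℕ} (hm : 0 < m) (A : (Fin m → Fin n) → ℝ)
    (lam : ℝ) (x : Fin n → ℝ) : Prop :=
  (∀ i, hmApply hm A x i = lam * x i) ∧ ∑ i, (x i) ^ 2 = 1

/-- The spectral radius of `A`: the largest modulus of an eigenvalue. -/
noncomputable def specRad {m n : ℕ} (hm : 0 < m) (A : (Fin m → Fin n) → ℝ) : ℝ :=
  sSup {r : ℝ | ∃ lam : ℂ, IsEigenvalue hm A lam ∧ r = ‖lam‖}

/-- The largest Z-eigenvalue of `A`. -/
noncomputable def zMax {m n : ℕ} (hm : 0 < m) (A : (Fin m → Fin n) → ℝ) : ℝ :=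
  sSup {lam : ℝ | ∃ x : Fin n → ℝ, IsZEigenpair hm A lam x}

/-- `A` is copositive: `A x^m ≥ 0` for every entrywise nonnegative real `x`. -/
def Copositive {m n : ℕ} (A : (Fin m → Fin n) → ℝ) : Prop :=
  ∀ x : Fin n → ℝ, (∀ i, 0 ≤ x i) → 0 ≤ formEval A x

/-- A directed hypergraph on vertex set `Fin n`: each edge is a pair
(tail, head) of disjoint nonempty vertex sets, and distinct edges have
distinct vertex sets. -/
structure DirHypergraph (n : ℕ) where
  edges : Finset (Finset (Fin n) × Finset (Fin n))
  tail_nonempty : ∀ e ∈ edges, e.1.Nonempty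
  head_nonempty : ∀ e ∈ edges, e.2.Nonempty
  tail_head_disjoint : ∀ e ∈ edges, Disjoint e.1 e.2
  union_injective : ∀ e ∈ edges, ∀ e' ∈ edges, e.1 ∪ e.2 = e'.1 ∪ e'.2 → e = e'

namespace DirHypergraph

variable {n : ℕ}

/-- `H` is `m`-uniform. -/
def IsUniform (H : DirHypergraph n) (m : ℕ) : Prop :=
  ∀ e ∈ H.edges, (e.1 ∪ e.2).card = m

/-- `H` is non-uniform: it has two edges of different cardinalities. -/
def NonUniform (H : DirHypergraph n) : Prop :=
  ∃ e ∈ H.edges, ∃ e' ∈ H.edges, (e.1 ∪ e.2).card ≠ (e'.1 ∪ e'.2).card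

/-- `m = m.c.e.(H)`, the maximum cardinality of an edge (the rank of `H`). -/
def mce (H : DirHypergraph n) (m : ℕ) : Prop :=
  (∀ e ∈ H.edges, (e.1 ∪ e.2).card ≤ m) ∧ ∃ e ∈ H.edges, (e.1 ∪ e.2).card = m

/-- `c = corank(H)`, the minimum cardinality of an edge. -/
def corank (H : DirHypergraph n) (c : ℕ) : Prop :=
  (∀ e ∈ H.edges, c ≤ (e.1 ∪ e.2).card) ∧ ∃ e ∈ H.edges, (e.1 ∪ e.2).card = c

end DirHypergraph

variable {n : ℕ}

/-- Out-degree of a vertex. -/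
def outDeg (H : DirHypergraph n) (v : Fin n) : ℕ :=
  (H.edges.filter (fun e => v ∈ e.1)).card

/-- In-degree of a vertex. -/
def inDeg (H : DirHypergraph n) (v : Fin n) : ℕ :=
  (H.edges.filter (fun e => v ∈ e.2)).card

/-- Degree of a vertex in the underlying undirected hypergraph. -/
def undDeg (H : DirHypergraph n) (v : Fin n) : ℕ :=
  (H.edges.filter (fun e => v ∈ e.1 ∪ e.2)).card

/-- The maximum out-degree `Δ⁺`. -/
noncomputable def maxOutDeg (H : DirHypergraph n) : ℝ :=
  sSup (Set.range fun v => (outDeg H v : ℝ))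

/-- The minimum out-degree `δ⁺`. -/
noncomputable def minOutDeg (H : DirHypergraph n) : ℝ :=
  sInf (Set.range fun v => (outDeg H v : ℝ))

/-- The out-adjacency hypermatrix of a directed `m`-uniform hypergraph:
the entry at the tuple `f = (i₁, …, i_m)` is `1/((m-k)!(k-1)!)` when, for some
edge `e` with `k = |T_e|`, the first `k` indices are exactly the distinct
elements of `T_e` and the last `m - k` indices are exactly the distinct
elements of `H_e`; all other entries are zero. -/
noncomputable def outAdj (m : ℕ) (H : DirHypergraph n) (f : Fin m → Fin n) : ℝ :=
  ∑ e ∈ H.edges,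
    if ((Finset.univ.filter fun j : Fin m => (j : ℕ) < e.1.card).image f = e.1 ∧
        (Finset.univ.filter fun j : Fin m => e.1.card ≤ (j : ℕ)).image f = e.2)
    then (1 : ℝ) / ((((m - e.1.card).factorial * (e.1.card - 1).factorial : ℕ)) : ℝ)
    else 0

/-- The in-adjacency hypermatrix of a directed `m`-uniform hypergraph. -/
noncomputable def inAdj (m : ℕ) (H : DirHypergraph n) (f : Fin m → Fin n) : ℝ :=
  ∑ e ∈ H.edges,
    if ((Finset.univ.filter fun j : Fin m => (j : ℕ) < m - e.1.card).image f = e.2 ∧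
        (Finset.univ.filter fun j : Fin m => m - e.1.card ≤ (j : ℕ)).image f = e.1)
    then (1 : ℝ) / ((((m - e.1.card - 1).factorial * (e.1.card).factorial : ℕ)) : ℝ)
    else 0

/-- The adjacency hypermatrix of the underlying undirected hypergraph `H_D`. -/
noncomputable def undAdj (m : ℕ) (H : DirHypergraph n) (f : Fin m → Fin n) : ℝ :=
  ∑ e ∈ H.edges,
    if (Function.Injective f ∧ Finset.univ.image f = e.1 ∪ e.2)
    then (1 : ℝ) / (((m - 1).factorial : ℕ) : ℝ)
    else 0

/-- The supersymmetric hypermatrix `B` with `b_{i₁…i_m} = |T_e|/m!` whenever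
`i₁, …, i_m` are distinct and `{i₁, …, i_m} = T_e ∪ H_e` for an edge `e`. -/
noncomputable def symB (m : ℕ) (H : DirHypergraph n) (f : Fin m → Fin n) : ℝ :=
  ∑ e ∈ H.edges,
    if (Function.Injective f ∧ Finset.univ.image f = e.1 ∪ e.2)
    then (e.1.card : ℝ) / (m.factorial : ℝ)
    else 0

/-- The order-`m` diagonal hypermatrix with diagonal entries `d`. -/
noncomputable def diagHM (m : ℕ) (d : Fin n → ℝ) (f : Fin m → Fin n) : ℝ :=
  ∑ i : Fin n, if f = (fun _ => i) then d i else 0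

/-- The normalizing constant `α` in the definition of the out-adjacency
hypermatrix of a general (non-uniform) directed hypergraph, for an edge with
tail of size `k` and `s` vertices in total, inside a rank-`m` hypergraph. -/
def alphaVal (m k s : ℕ) : ℕ :=
  ∑ r ∈ Finset.range (m - s + 1),
    (∑ t ∈ (Finset.Nat.antidiagonalTuple k (r + k)).filter (fun t => ∀ i, 1 ≤ t i),
        Nat.multinomial Finset.univ t) *
    (∑ t ∈ (Finset.Nat.antidiagonalTuple (s - k) (m - k - r)).filter (fun t => ∀ i, 1 ≤ t i),
        Nat.multinomial Finset.univ t)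

/-- The out-adjacency hypermatrix of a general directed (non-uniform)
hypergraph of rank `m`:  the entry at `f = (p₁, …, p_m)` is `k/α` when for some
edge `e` (with `|T_e| = k`, `|T_e ∪ H_e| = s`) and some `t` with
`k ≤ t ≤ m - s + k`, the first `t` indices all lie in `T_e`, covering it, and
the remaining indices all lie in `H_e`, covering it; other entries are zero. -/
noncomputable def outAdjNU (m : ℕ) (H : DirHypergraph n) (f : Fin m → Fin n) : ℝ :=
  ∑ e ∈ H.edges,
    ∑ t ∈ Finset.Icc e.1.card (m - (e.1.card + e.2.card) + e.1.card),
      if ((Finset.univ.filter fun j : Fin m => (j : ℕ) < t).image f = e.1 ∧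
          (Finset.univ.filter fun j : Fin m => t ≤ (j : ℕ)).image f = e.2)
      then (e.1.card : ℝ) / (alphaVal m e.1.card (e.1.card + e.2.card) : ℝ)
      else 0

/-! For `m`-uniform `H`, the hypermatrices `A_H⁺` and `B` define the same form `x ↦ A x^m`:
an edge `e` with `|T_e| = k` contributes `k ∏_{v ∈ e} x_v` to both, through `k! (m-k)!` index
tuples of weight `1/((m-k)!(k-1)!)` in `A_H⁺` and `m!` tuples of weight `k/m!` in `B`.
A Z-eigenvalue of any hypermatrix is the value of its form at the eigenvector, so every
Z-eigenvalue of `A_H⁺` is at most the maximum of the common form on the unit sphere. Since `B`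
is supersymmetric, the gradient of its form is `m B x^{m-1}`, so by Lagrange multipliers a
maximiser is a Z-eigenvector of `B` and that maximum is `λ_max^Z(B)`. It is nonnegative because
the form of `B` vanishes at the coordinate vectors, which matters because `zMax` of a hypermatrix
without Z-eigenvalues is the junk value `sSup ∅ = 0`. -/

open scoped Nat

section Counting

variable {α β : Type*} [DecidableEq β]

lemma Finset.prod_comp_eq_of_image_eq {M : Type*} [CommMonoid M] {s : Finset α} {T : Finset β}
    {f : α → β} (hf : s.image f = T) (hcard : #T = #s) (x : β → M) :
    ∏ j ∈ s, x (f j) = ∏ v ∈ T, x v := by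
  rw [← hf, prod_image (injOn_of_card_image_eq (hf ▸ hcard))]

variable [Fintype α]

lemma image_univ_subtype (p : α → Prop) [DecidablePred p] (f : α → β) :
    univ.image (fun a : {a // p a} => f a) = (univ.filter p).image f := by
  ext b
  simp

lemma prod_eq_prod_union_of_image_filter_eq {M : Type*} [CommMonoid M] (p : α → Prop)
    [DecidablePred p] {T U : Finset β} (hTU : Disjoint T U) {f : α → β}
    (hfT : (univ.filter p).image f = T) (hfU : (univ.filter (¬p ·)).image f = U)
    (hT : #T = Fintype.card {a // p a}) (hU : #U = Fintype.card {a // ¬p a}) (x : β → M) :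
    ∏ a, x (f a) = ∏ v ∈ T ∪ U, x v := by
  rw [← prod_filter_mul_prod_filter_not univ p, prod_union hTU,
    prod_comp_eq_of_image_eq hfT (by rw [hT, Fintype.card_subtype]),
    prod_comp_eq_of_image_eq hfU (by rw [hU, Fintype.card_subtype])]

variable [DecidableEq α] [Fintype β]

lemma card_filter_image_univ_eq (T : Finset β) (hT : #T = Fintype.card α) :
    #{f : α → β | univ.image f = T} = (Fintype.card α)! := by
  have hinj : Function.Injective fun (e : α ↪ T) a => (e a : β) := fun e e' h => by
    ext a
    exact congrFun h a
  have hfilter : ({f : α → β | univ.image f = T} : Finset _) =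
      univ.image fun (e : α ↪ T) a => (e a : β) := by
    ext f
    simp only [mem_filter, mem_univ, true_and, mem_image]
    constructor
    · intro hf
      have hf_inj : Function.Injective f := by
        rw [← Set.injOn_univ, ← coe_univ, ← card_image_iff, hf, hT, card_univ]
      exact ⟨⟨fun a => ⟨f a, hf ▸ mem_image_of_mem f (mem_univ a)⟩,
        fun a b h => hf_inj (congrArg Subtype.val h)⟩, rfl⟩
    · rintro ⟨e, rfl⟩
      refine eq_of_subset_of_card_le (fun b hb => ?_) ?_
      · obtain ⟨a, -, rfl⟩ := mem_image.1 hb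
        exact (e a).2
      · rw [hT, card_image_of_injective _ fun a b h => e.injective (Subtype.ext h), card_univ]
  rw [hfilter, card_image_of_injective _ hinj, card_univ, Fintype.card_embedding_eq,
    Fintype.card_coe, hT, Nat.descFactorial_self]

lemma card_filter_image_filter_eq_and_image_filter_not_eq (p : α → Prop) [DecidablePred p]
    (T U : Finset β) (hT : #T = Fintype.card {a // p a}) (hU : #U = Fintype.card {a // ¬p a}) :
    #{f : α → β | (univ.filter p).image f = T ∧ (univ.filter (¬p ·)).image f = U} =
      (#T)! * (#U)! := by
  rw [card_equiv (Equiv.piEquivPiSubtypeProd p fun _ => β)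
    (t := ({g | univ.image g = T} : Finset _) ×ˢ ({g | univ.image g = U} : Finset _))
    (fun f => by simp [image_univ_subtype]), card_product, card_filter_image_univ_eq T hT,
    card_filter_image_univ_eq U hU, hT, hU]

end Counting

lemma sum_ite_mul_eq_card_mul {ι : Type*} [Fintype ι] (P : ι → Prop) [DecidablePred P]
    (c r : ℝ) (g : ι → ℝ) (hg : ∀ i, P i → g i = r) :
    ∑ i, (if P i then c else 0) * g i = #{i | P i} * c * r := by
  simp_rw [ite_mul, zero_mul]
  rw [← sum_filter, sum_congr rfl fun i hi => by rw [hg i (mem_filter.1 hi).2], sum_const,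
    nsmul_eq_mul, mul_assoc]

lemma Fin.card_subtype_val_lt {m k : ℕ} (hk : k ≤ m) :
    Fintype.card {j : Fin m // (j : ℕ) < k} = k := by
  rw [Fintype.card_subtype, Fin.card_filter_val_lt, min_eq_right hk]

lemma sum_outAdj_summand_mul_prod {m n : ℕ} {T U : Finset (Fin n)} (hTU : Disjoint T U)
    (hT : T.Nonempty) (hcard : #(T ∪ U) = m) (x : Fin n → ℝ) :
    ∑ f : Fin m → Fin n,
      (if (univ.filter fun j : Fin m => (j : ℕ) < #T).image f = T ∧
          (univ.filter fun j : Fin m => #T ≤ (j : ℕ)).image f = U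
        then (1 : ℝ) / (((m - #T)! * (#T - 1)! : ℕ) : ℝ) else 0) * ∏ j, x (f j) =
      #T * ∏ v ∈ T ∪ U, x v := by
  set k := #T
  have hk : k ≤ m := hcard ▸ card_le_card subset_union_left
  have hU : #U = m - k := by rw [← hcard, card_union_of_disjoint hTU]; omega
  have hcardT : #T = Fintype.card {j : Fin m // (j : ℕ) < k} := (Fin.card_subtype_val_lt hk).symm
  have hcardU : #U = Fintype.card {j : Fin m // ¬(j : ℕ) < k} := by
    rw [Fintype.card_subtype_compl, Fin.card_subtype_val_lt hk, Fintype.card_fin, hU]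
  simp_rw [← not_lt (b := k)]
  rw [sum_ite_mul_eq_card_mul _ _ _ _ fun f hf =>
      prod_eq_prod_union_of_image_filter_eq _ hTU hf.1 hf.2 hcardT hcardU x,
    card_filter_image_filter_eq_and_image_filter_not_eq _ T U hcardT hcardU, hU]
  have hk0 : 0 < k := card_pos.2 hT
  rw [← Nat.mul_factorial_pred hk0.ne']
  push_cast
  field_simp

lemma sum_symB_summand_mul_prod {m n : ℕ} {s : Finset (Fin n)} (hs : #s = m) (c : ℝ)
    (x : Fin n → ℝ) :
    ∑ f : Fin m → Fin n, (if Function.Injective f ∧ univ.image f = s then c else 0) *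
      ∏ j, x (f j) = m ! * c * ∏ v ∈ s, x v := by
  have hcard : #s = Fintype.card (Fin m) := by rw [hs, Fintype.card_fin]
  have hinj : ∀ f : Fin m → Fin n, univ.image f = s → Function.Injective f := fun f hf => by
    rw [← Set.injOn_univ, ← coe_univ, ← card_image_iff, hf, hcard, card_univ]
  rw [sum_ite_mul_eq_card_mul _ _ _ _ fun f hf =>
      prod_comp_eq_of_image_eq hf.2 (by rw [hcard, card_univ]) x,
    filter_congr fun f _ => and_iff_right_of_imp (hinj f), card_filter_image_univ_eq s hcard,
    Fintype.card_fin]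

lemma formEval_outAdj_eq_formEval_symB {m n : ℕ} (H : DirHypergraph n) (hH : H.IsUniform m)
    (x : Fin n → ℝ) :
    formEval (outAdj m H) x = formEval (symB m H) x := by
  unfold formEval outAdj symB
  simp_rw [sum_mul]
  rw [sum_comm, sum_comm (s := (univ : Finset (Fin m → Fin n)))]
  refine sum_congr rfl fun e he => ?_
  rw [sum_outAdj_summand_mul_prod (H.tail_head_disjoint e he) (H.tail_nonempty e he) (hH e he),
    sum_symB_summand_mul_prod (hH e he)]
  field_simp

section ZEigenvalues

variable {m n : ℕ}

def IsSupersymmetric (A : (Fin m → Fin n) → ℝ) : Prop :=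
  ∀ (σ : Equiv.Perm (Fin m)) (f : Fin m → Fin n), A (f ∘ σ) = A f

lemma sum_mul_prod_erase_zero_mul (hm : 0 < m) (A : (Fin m → Fin n) → ℝ) (x v : Fin n → ℝ) :
    ∑ f, A f * ((∏ j ∈ univ.erase ⟨0, hm⟩, x (f j)) * v (f ⟨0, hm⟩)) =
      ∑ i, hmApply hm A x i * v i := by
  rw [← sum_fiberwise univ (fun f : Fin m → Fin n => f ⟨0, hm⟩)]
  refine sum_congr rfl fun i _ => ?_
  rw [hmApply, sum_mul, filter_ne']
  refine sum_congr rfl fun f hf => ?_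
  rw [(mem_filter.1 hf).2, mul_assoc]

lemma formEval_eq_sum_hmApply_mul (hm : 0 < m) (A : (Fin m → Fin n) → ℝ) (x : Fin n → ℝ) :
    formEval A x = ∑ i, hmApply hm A x i * x i := by
  rw [← sum_mul_prod_erase_zero_mul hm A x x, formEval]
  exact sum_congr rfl fun f _ => by rw [prod_erase_mul _ _ (mem_univ _)]

lemma IsZEigenpair.eq_formEval {hm : 0 < m} {A : (Fin m → Fin n) → ℝ} {lam : ℝ}
    {x : Fin n → ℝ} (h : IsZEigenpair hm A lam x) : lam = formEval A x := by
  rw [formEval_eq_sum_hmApply_mul hm, ← mul_one lam, ← h.2, mul_sum]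
  exact sum_congr rfl fun i _ => by rw [h.1 i]; ring

lemma IsSupersymmetric.sum_mul_prod_erase_mul {A : (Fin m → Fin n) → ℝ}
    (hA : IsSupersymmetric A) (hm : 0 < m) (k : Fin m) (x v : Fin n → ℝ) :
    ∑ f, A f * ((∏ j ∈ univ.erase k, x (f j)) * v (f k)) = ∑ i, hmApply hm A x i * v i := by
  set σ := Equiv.swap (⟨0, hm⟩ : Fin m) k
  rw [← sum_mul_prod_erase_zero_mul hm A x v]
  refine Fintype.sum_bijective (· ∘ σ) σ.bijective.comp_right _ _ fun f => ?_
  have hσ : σ ⟨0, hm⟩ = k := Equiv.swap_apply_left _ _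
  have hprod : ∏ j ∈ univ.erase ⟨0, hm⟩, x (f (σ j)) = ∏ j ∈ univ.erase k, x (f j) := by
    have hset : univ.erase k = (univ.erase ⟨0, hm⟩).map σ.toEmbedding := by
      rw [map_erase, Equiv.coe_toEmbedding, hσ, map_univ_equiv]
    rw [hset, prod_map]
    rfl
  simp only [Function.comp_apply]
  rw [hA, hσ, hprod]

lemma hasStrictFDerivAt_formEval (A : (Fin m → Fin n) → ℝ) (x : Fin n → ℝ) :
    HasStrictFDerivAt (formEval A)
      (∑ f, A f • ∑ k, (∏ j ∈ univ.erase k, x (f j)) •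
        (ContinuousLinearMap.proj (f k) : (Fin n → ℝ) →L[ℝ] ℝ)) x :=
  HasStrictFDerivAt.fun_sum fun f _ => (HasStrictFDerivAt.finsetProd fun j _ =>
    hasStrictFDerivAt_apply (f j) x).const_mul (A f)

lemma IsSupersymmetric.hasStrictFDerivAt_formEval {A : (Fin m → Fin n) → ℝ}
    (hA : IsSupersymmetric A) (hm : 0 < m) (x : Fin n → ℝ) :
    HasStrictFDerivAt (formEval A)
      ((m : ℝ) • ∑ i, hmApply hm A x i • (ContinuousLinearMap.proj i : (Fin n → ℝ) →L[ℝ] ℝ))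
      x := by
  refine (_root_.hasStrictFDerivAt_formEval A x).congr_fderiv
    (ContinuousLinearMap.ext fun v => ?_)
  simp only [FunLike.coe_sum, Finset.sum_apply, FunLike.coe_smul, Pi.smul_apply,
    ContinuousLinearMap.proj_apply, smul_eq_mul, mul_sum]
  rw [sum_comm, ← mul_sum]
  simp only [hA.sum_mul_prod_erase_mul hm, sum_const, card_univ, Fintype.card_fin, nsmul_eq_mul]

lemma hasStrictFDerivAt_sum_sq (x : Fin n → ℝ) :
    HasStrictFDerivAt (fun y : Fin n → ℝ => ∑ i, y i ^ 2)
      ((2 : ℝ) • ∑ i, x i • (ContinuousLinearMap.proj i : (Fin n → ℝ) →L[ℝ] ℝ)) x := by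
  refine (HasStrictFDerivAt.fun_sum fun i _ => (hasStrictFDerivAt_apply i x).pow 2).congr_fderiv
    (ContinuousLinearMap.ext fun v => ?_)
  simp [mul_sum, mul_assoc]

lemma isCompact_sum_sq_eq_one : IsCompact {y : Fin n → ℝ | ∑ i, y i ^ 2 = 1} := by
  refine Metric.isCompact_of_isClosed_isBounded
    (isClosed_eq (by fun_prop) continuous_const) ?_
  refine (Metric.isBounded_closedBall (x := 0) (r := 1)).subset fun y hy => ?_
  rw [mem_closedBall_zero_iff, pi_norm_le_iff_of_nonneg zero_le_one]
  intro i
  rw [Real.norm_eq_abs, ← sq_le_one_iff_abs_le_one]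
  calc y i ^ 2 ≤ ∑ j, y j ^ 2 := single_le_sum (fun j _ => sq_nonneg (y j)) (mem_univ i)
    _ = 1 := hy

lemma IsSupersymmetric.isZEigenpair_of_isMaxOn {A : (Fin m → Fin n) → ℝ}
    (hA : IsSupersymmetric A) (hm : 0 < m) {x : Fin n → ℝ} (hx : ∑ i, x i ^ 2 = 1)
    (hmax : IsMaxOn (formEval A) {y | ∑ i, y i ^ 2 = 1} x) :
    IsZEigenpair hm A (formEval A x) x := by
  have hextr : IsLocalExtrOn (formEval A) {y | ∑ i, y i ^ 2 = ∑ i, x i ^ 2} x := by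
    rw [hx]
    exact hmax.localize.isExtr
  obtain ⟨a, b, hab, hcomb⟩ := hextr.exists_multipliers_of_hasStrictFDerivAt_1d
    (hasStrictFDerivAt_sum_sq x) (hA.hasStrictFDerivAt_formEval hm x)
  have key : ∀ v : Fin n → ℝ,
      a * (2 * ∑ i, x i * v i) + b * (m * ∑ i, hmApply hm A x i * v i) = 0 := fun v => by
    simpa [mul_sum] using DFunLike.congr_fun hcomb v
  have hlam : a * 2 + b * (m * formEval A x) = 0 := by
    simpa [← sq, hx, ← formEval_eq_sum_hmApply_mul hm] using key x
  have hb : b ≠ 0 := by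
    rintro rfl
    exact hab (Prod.ext (show a = 0 by linarith) rfl)
  refine ⟨fun i => ?_, hx⟩
  have hi := key (Pi.single i 1)
  simp only [Pi.single_apply, mul_ite, mul_one, mul_zero, sum_ite_eq', mem_univ, if_true] at hi
  have hm' : (m : ℝ) ≠ 0 := by positivity
  have : b * m * (hmApply hm A x i - formEval A x * x i) = 0 := by
    linear_combination hi - x i * hlam
  simpa [hb, hm', sub_eq_zero] using this

lemma IsSupersymmetric.exists_isZEigenpair_isMaxOn [Nonempty (Fin n)]
    {A : (Fin m → Fin n) → ℝ} (hA : IsSupersymmetric A) (hm : 0 < m) :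
    ∃ x, IsZEigenpair hm A (formEval A x) x ∧
      IsMaxOn (formEval A) {y | ∑ i, y i ^ 2 = 1} x := by
  obtain ⟨x, hx, hmax⟩ := isCompact_sum_sq_eq_one.exists_isMaxOn
    ⟨Pi.single (Classical.arbitrary _) 1, by simp [Pi.single_apply]⟩
    (by unfold formEval; fun_prop : Continuous (formEval A)).continuousOn
  exact ⟨x, hA.isZEigenpair_of_isMaxOn hm hx hmax, hmax⟩

lemma IsSupersymmetric.formEval_le_zMax {A : (Fin m → Fin n) → ℝ} (hA : IsSupersymmetric A)
    (hm : 0 < m) {y : Fin n → ℝ} (hy : ∑ i, y i ^ 2 = 1) : formEval A y ≤ zMax hm A := by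
  have : Nonempty (Fin n) := by
    by_contra h
    simp [not_nonempty_iff.1 h] at hy
  obtain ⟨x, hx, hmax⟩ := hA.exists_isZEigenpair_isMaxOn hm
  refine (hmax hy).trans (le_csSup ⟨formEval A x, ?_⟩ ⟨x, hx⟩)
  rintro _ ⟨z, hz⟩
  exact hz.eq_formEval ▸ hmax hz.2

lemma zMax_le_of_forall_formEval_le (hm : 0 < m) (A : (Fin m → Fin n) → ℝ) {c : ℝ}
    (hc : 0 ≤ c) (h : ∀ y : Fin n → ℝ, ∑ i, y i ^ 2 = 1 → formEval A y ≤ c) : zMax hm A ≤ c :=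
  Real.sSup_le (fun _ ⟨y, hy⟩ => hy.eq_formEval ▸ h y hy.2) hc

end ZEigenvalues

section SymB

variable {m n : ℕ}

lemma symB_isSupersymmetric (H : DirHypergraph n) : IsSupersymmetric (symB m H) := by
  intro σ f
  unfold symB
  refine sum_congr rfl fun e _ => ?_
  have himage : univ.image (f ∘ σ) = univ.image f := by rw [← image_image, image_univ_equiv]
  simp only [Equiv.injective_comp, himage]

lemma DirHypergraph.one_lt_card_union (H : DirHypergraph n) {e : Finset (Fin n) × Finset (Fin n)}
    (he : e ∈ H.edges) : 1 < #(e.1 ∪ e.2) := by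
  rw [card_union_of_disjoint (H.tail_head_disjoint e he)]
  have := (H.tail_nonempty e he).card_pos
  have := (H.head_nonempty e he).card_pos
  omega

lemma formEval_symB_single (H : DirHypergraph n) (i : Fin n) :
    formEval (symB m H) (Pi.single i 1) = 0 := by
  refine sum_eq_zero fun f _ => ?_
  by_cases hf : ∀ j, f j = i
  · refine mul_eq_zero_of_left (sum_eq_zero fun e he => if_neg fun hfe => ?_) _
    have : #(univ.image f) ≤ 1 := card_le_one.2 fun a ha b hb => by
      obtain ⟨j, -, rfl⟩ := mem_image.1 ha
      obtain ⟨j', -, rfl⟩ := mem_image.1 hb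
      rw [hf, hf]
    exact (H.one_lt_card_union he).not_ge (hfe.2 ▸ this)
  · obtain ⟨j, hj⟩ := not_forall.1 hf
    exact mul_eq_zero_of_right _ (prod_eq_zero (mem_univ j) (Pi.single_eq_of_ne hj 1))

lemma zMax_symB_nonneg (hm : 0 < m) (H : DirHypergraph n) : 0 ≤ zMax hm (symB m H) := by
  rcases isEmpty_or_nonempty (Fin n) with hn | ⟨⟨i⟩⟩
  · have hempty : {lam | ∃ x, IsZEigenpair hm (symB m H) lam x} = ∅ :=
      Set.eq_empty_of_forall_notMem fun _ ⟨_, hx⟩ => by simpa using hx.2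
    rw [zMax, hempty, Real.sSup_empty]
  · exact formEval_symB_single H i ▸
      (symB_isSupersymmetric H).formEval_le_zMax hm (by simp [Pi.single_apply])

end SymB

theorem zMax_outAdj_le_zMax_symB_general {m n : ℕ} (hm : 0 < m)
    (H : DirHypergraph n) (hH : H.IsUniform m) :
    zMax hm (outAdj m H) ≤ zMax hm (symB m H) :=
  zMax_le_of_forall_formEval_le hm _ (zMax_symB_nonneg hm H) fun y hy =>
    formEval_outAdj_eq_formEval_symB H hH y ▸ (symB_isSupersymmetric H).formEval_le_zMax hm hy

/-- For a directed `m`-uniform hypergraph `H` with `m` even,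
the maximum Z-eigenvalue of `A_H⁺` is at most the maximum Z-eigenvalue of the
supersymmetric hypermatrix `B` with the same associated form. -/
theorem zMax_outAdj_le_zMax_symB {m n : ℕ} (hm : 0 < m) (heven : Even m)
    (H : DirHypergraph n) (hH : H.IsUniform m) :
    zMax hm (outAdj m H) ≤ zMax hm (symB m H) :=
  zMax_outAdj_le_zMax_symB_general hm H hH
end

section
/- Let H₁ = (V, E₁) and H₂ = (V, E₂) be two directed m-uniform hypergraphs on the same n vertices that have the same underlying undirected hypergraph. Then A_{H₁} = A_{H₁}⁺ + A_{H₁}⁻ and A_{H₂} = A_{H₂}⁺ + A_{H₂}⁻ are isospectral: λ ∈ ℂ is an eigenvalue of A_{H₁} if and only if λ is an eigenvalue of A_{H₂}. -/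
open Finset

variable {n : ℕ}

/-!
For an `m`-uniform directed hypergraph, `((A⁺ + A⁻) x^{m-1})_i` is the sum, over the edges `U`
containing `i`, of `∏_{v ∈ U \ {i}} x_v`: an edge with tail of size `k` and `i` in its tail is
listed, with `i` in front, by exactly `(k-1)! (m-k)!` index tuples of `A⁺`, which is the inverse of
the entry of `A⁺`, and symmetrically for `A⁻` when `i` is in the head. This depends only on the
underlying undirected hypergraph, so both hypermatrices have the same eigenvalue equations.
-/

lemma image_eq_erase_of_image_insert_eq {ι γ : Type*} [DecidableEq ι] [DecidableEq γ]
    {f : ι → γ} {a : ι} {P : Finset ι} {S : Finset γ} (hS : (insert a P).image f = S)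
    (hcard : #S = #P + 1) :
    P.image f = S.erase (f a) := by
  rw [image_insert] at hS
  have hfa : f a ∉ P.image f := fun h => by
    rw [insert_eq_of_mem h] at hS
    have := hS ▸ card_image_le (s := P) (f := f)
    omega
  rw [← hS, erase_insert hfa]

section BlockCounting

variable {ι γ : Type*} [Fintype ι] [DecidableEq ι] [Fintype γ] [DecidableEq γ]

lemma card_image_eq_and_eq_off (P : Finset ι) (S : Finset γ) (g : ι → γ) (h : #P = #S) :
    #{f : ι → γ | P.image f = S ∧ ∀ j ∉ P, f j = g j} = (#P).factorial := by
  induction P using Finset.induction_on generalizing S g with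
  | empty =>
    obtain rfl : S = ∅ := card_eq_zero.mp h.symm
    have : ({f | ∀ j, f j = g j} : Finset (ι → γ)) = {g} := by
      ext f
      simp [funext_iff]
    simp [this]
  | @insert a P ha ih =>
    rw [card_insert_of_notMem ha] at h
    have hmaps : ∀ f ∈ ({f | (insert a P).image f = S ∧ ∀ j ∉ insert a P, f j = g j}
        : Finset (ι → γ)), f a ∈ S := fun f hf =>
      (mem_filter.mp hf).2.1 ▸ mem_image_of_mem f (mem_insert_self a P)
    rw [card_eq_sum_card_fiberwise hmaps]
    calc _ = ∑ v ∈ S, (#P).factorial := sum_congr rfl fun v hv => by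
          rw [← ih (S.erase v) (Function.update g a v) (by rw [card_erase_of_mem hv]; omega)]
          congr 1
          ext f
          simp only [mem_filter, mem_univ, true_and, mem_insert, not_or]
          constructor
          · rintro ⟨⟨himage, hoff⟩, rfl⟩
            refine ⟨image_eq_erase_of_image_insert_eq himage h.symm, fun j hj => ?_⟩
            rcases eq_or_ne j a with rfl | hja
            · simp
            · rw [Function.update_of_ne hja, hoff j ⟨hja, hj⟩]
          · rintro ⟨himage, hoff⟩
            have hfa : f a = v := by simpa using hoff a ha
            refine ⟨⟨?_, fun j hj => ?_⟩, hfa⟩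
            · rw [image_insert, himage, hfa, insert_erase hv]
            · rw [hoff j hj.2, Function.update_of_ne hj.1]
      _ = (#(insert a P)).factorial := by
          rw [sum_const, smul_eq_mul, ← h, card_insert_of_notMem ha, Nat.factorial_succ]

lemma card_image_eq_image_eq_and_eq_off {P₁ P₂ : Finset ι} (hP : Disjoint P₁ P₂)
    (S₁ S₂ : Finset γ) (g : ι → γ) (h₁ : #P₁ = #S₁) (h₂ : #P₂ = #S₂) :
    #{f : ι → γ | P₁.image f = S₁ ∧ P₂.image f = S₂ ∧ ∀ j ∉ P₁ ∪ P₂, f j = g j}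
      = (#P₁).factorial * (#P₂).factorial := by
  set T : Finset (ι → γ) := {h | P₂.image h = S₂ ∧ ∀ j ∉ P₂, h j = g j}
  have hmaps : ∀ f ∈ ({f | P₁.image f = S₁ ∧ P₂.image f = S₂ ∧ ∀ j ∉ P₁ ∪ P₂, f j = g j}
      : Finset (ι → γ)), P₁.piecewise g f ∈ T := by
    intro f hf
    simp only [T, mem_filter, mem_univ, true_and, mem_union, not_or] at hf ⊢
    refine ⟨?_, fun j hj => ?_⟩
    · rw [← hf.2.1]
      exact image_congr fun j hj => piecewise_eq_of_notMem _ _ _ (disjoint_right.mp hP hj)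
    · by_cases hj₁ : j ∈ P₁
      · exact piecewise_eq_of_mem _ _ _ hj₁
      · rw [piecewise_eq_of_notMem _ _ _ hj₁, hf.2.2 j ⟨hj₁, hj⟩]
  rw [card_eq_sum_card_fiberwise hmaps]
  calc _ = ∑ h ∈ T, (#P₁).factorial := sum_congr rfl fun h hh => by
        simp only [T, mem_filter, mem_univ, true_and] at hh
        rw [← card_image_eq_and_eq_off P₁ S₁ h h₁]
        congr 1
        ext f
        simp only [mem_filter, mem_univ, true_and, mem_union, not_or]
        constructor
        · rintro ⟨⟨himage, -, -⟩, rfl⟩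
          exact ⟨himage, fun j hj => (piecewise_eq_of_notMem _ _ _ hj).symm⟩
        · rintro ⟨himage, hoff⟩
          refine ⟨⟨himage, ?_, fun j hj => ?_⟩, funext fun j => ?_⟩
          · rw [← hh.1]
            exact image_congr fun j hj => hoff j (disjoint_right.mp hP hj)
          · rw [hoff j hj.1, hh.2 j hj.2]
          · by_cases hj₁ : j ∈ P₁
            · rw [piecewise_eq_of_mem _ _ _ hj₁, hh.2 j (disjoint_left.mp hP hj₁)]
            · rw [piecewise_eq_of_notMem _ _ _ hj₁, hoff j hj₁]
    _ = _ := by rw [sum_const, smul_eq_mul, card_image_eq_and_eq_off P₂ S₂ g h₂, mul_comm]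

lemma card_apply_eq_image_eq_image_compl_eq {P : Finset ι} {j₀ : ι} (hj₀ : j₀ ∈ P)
    {S₁ S₂ : Finset γ} {i : γ} (hi : i ∈ S₁) (h₁ : #P = #S₁) (h₂ : #Pᶜ = #S₂) :
    #{f : ι → γ | f j₀ = i ∧ P.image f = S₁ ∧ Pᶜ.image f = S₂}
      = (#P - 1).factorial * (#Pᶜ).factorial := by
  -- pinning `f j₀ = i` makes `{j₀} ↦ {i}` a block of its own, leaving `P.erase j₀ ↦ S₁.erase i`
  have hP : insert j₀ (P.erase j₀) = P := insert_erase hj₀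
  rw [← card_erase_of_mem hj₀, ← card_image_eq_image_eq_and_eq_off
    (disjoint_compl_right.mono_left (erase_subset j₀ P)) (S₁.erase i) S₂ (fun _ => i)
    (by rw [card_erase_of_mem hj₀, card_erase_of_mem hi, h₁]) h₂]
  congr 1
  ext f
  simp only [mem_filter, mem_univ, true_and, mem_union, mem_erase, mem_compl, not_or]
  constructor
  · rintro ⟨rfl, himage, hcompl⟩
    refine ⟨image_eq_erase_of_image_insert_eq (by rwa [hP]) ?_, hcompl, fun j hj => ?_⟩
    · rw [← h₁, card_erase_add_one hj₀]
    · obtain rfl : j = j₀ := by_contra fun hj₀' => hj.1 ⟨hj₀', not_not.mp hj.2⟩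
      rfl
  · rintro ⟨himage, hcompl, hoff⟩
    have hfj₀ : f j₀ = i := hoff j₀ ⟨fun h => h.1 rfl, not_not.mpr hj₀⟩
    refine ⟨hfj₀, ?_, hcompl⟩
    rw [← hP, image_insert, himage, hfj₀, insert_erase hi]

lemma sum_prod_erase_apply_eq_image_eq_image_compl_eq {R : Type*} [CommSemiring R]
    (x : γ → R) {P : Finset ι} {j₀ : ι} (hj₀ : j₀ ∈ P) {S₁ S₂ : Finset γ}
    (hS : Disjoint S₁ S₂) (h₁ : #P = #S₁) (h₂ : #Pᶜ = #S₂) (i : γ) :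
    ∑ f ∈ ({f | f j₀ = i ∧ P.image f = S₁ ∧ Pᶜ.image f = S₂} : Finset (ι → γ)),
        ∏ j ∈ univ.erase j₀, x (f j)
      = if i ∈ S₁ then
          (((#P - 1).factorial * (#Pᶜ).factorial : ℕ) : R) * ∏ v ∈ (S₁ ∪ S₂).erase i, x v
        else 0 := by
  split_ifs with hi
  · rw [← card_apply_eq_image_eq_image_compl_eq hj₀ hi h₁ h₂, ← nsmul_eq_mul, ← sum_const]
    refine sum_congr rfl fun f hf => ?_
    obtain ⟨rfl, himage, hcompl⟩ := (mem_filter.mp hf).2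
    have hcard : #(S₁ ∪ S₂) = #(univ.erase j₀) + 1 := by
      rw [card_union_of_disjoint hS, card_erase_add_one (mem_univ j₀), ← h₁, ← h₂,
        card_add_card_compl, card_univ]
    have himage_erase : (univ.erase j₀).image f = (S₁ ∪ S₂).erase (f j₀) :=
      image_eq_erase_of_image_insert_eq
        (by rw [insert_erase (mem_univ j₀), ← union_compl P, image_union, himage, hcompl]) hcard
    have hinj : Set.InjOn f (univ.erase j₀ : Finset ι) := card_image_iff.mp <| by
      rw [himage_erase, card_erase_of_mem (mem_union_left _ (himage ▸ mem_image_of_mem f hj₀)),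
        hcard, Nat.add_sub_cancel]
    rw [← himage_erase, prod_image hinj]
  · refine sum_eq_zero fun f hf => absurd ?_ hi
    obtain ⟨rfl, himage, -⟩ := (mem_filter.mp hf).2
    exact himage ▸ mem_image_of_mem f hj₀

end BlockCounting

section Hypermatrix

variable {m : ℕ} (hm : 0 < m)

lemma hmApplyC_add (A B : (Fin m → Fin n) → ℝ) (x : Fin n → ℂ) (i : Fin n) :
    hmApplyC hm (fun f => A f + B f) x i = hmApplyC hm A x i + hmApplyC hm B x i := by
  simp only [hmApplyC, Complex.ofReal_add, add_mul, sum_add_distrib]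

lemma hmApplyC_sum {α : Type*} (s : Finset α) (A : α → (Fin m → Fin n) → ℝ)
    (x : Fin n → ℂ) (i : Fin n) :
    hmApplyC hm (fun f => ∑ a ∈ s, A a f) x i = ∑ a ∈ s, hmApplyC hm (A a) x i := by
  simp only [hmApplyC, Complex.ofReal_sum, sum_mul]
  exact sum_comm

noncomputable def blockHM (m k : ℕ) (S₁ S₂ : Finset (Fin n)) (c : ℝ) (f : Fin m → Fin n) : ℝ :=
  if (univ.filter fun j : Fin m => (j : ℕ) < k).image f = S₁ ∧
      (univ.filter fun j : Fin m => k ≤ (j : ℕ)).image f = S₂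
  then c else 0

lemma hmApplyC_blockHM {k : ℕ} (hk : 0 < k) (hkm : k ≤ m) {S₁ S₂ : Finset (Fin n)}
    (hS : Disjoint S₁ S₂) (h₁ : #S₁ = k) (h₂ : #S₂ = m - k) (c : ℝ) (x : Fin n → ℂ)
    (i : Fin n) :
    hmApplyC hm (blockHM m k S₁ S₂ c) x i
      = if i ∈ S₁ then
          (c * ((k - 1).factorial * (m - k).factorial : ℕ) : ℂ) * ∏ v ∈ (S₁ ∪ S₂).erase i, x v
        else 0 := by
  set P : Finset (Fin m) := univ.filter fun j : Fin m => (j : ℕ) < k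
  have hcompl : Pᶜ = univ.filter fun j : Fin m => k ≤ (j : ℕ) := by simp [P]
  have hP : #P = k := by simp [P, Fin.card_filter_val_lt, hkm]
  have hPc : #Pᶜ = m - k := by rw [card_compl, hP, Fintype.card_fin]
  have hsum := sum_prod_erase_apply_eq_image_eq_image_compl_eq x
    (show ⟨0, hm⟩ ∈ P by simpa [P] using hk) hS (hP.trans h₁.symm) (hPc.trans h₂.symm) i
  rw [hP, hPc, hcompl] at hsum
  simp only [hmApplyC, blockHM, apply_ite (fun r : ℝ => (r : ℂ)), Complex.ofReal_zero, ite_mul,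
    zero_mul, ← sum_filter, filter_filter, ← mul_sum, filter_ne']
  rw [hsum, mul_ite, mul_zero, mul_assoc]

end Hypermatrix

lemma ofReal_one_div_natCast_mul_natCast {N : ℕ} (hN : N ≠ 0) :
    ((1 / (N : ℝ) : ℝ) : ℂ) * (N : ℂ) = 1 := by
  push_cast
  exact one_div_mul_cancel (Nat.cast_ne_zero.mpr hN)

lemma hmApplyC_outAdj_add_inAdj {m : ℕ} (hm : 0 < m) {H : DirHypergraph n} (hu : H.IsUniform m)
    (x : Fin n → ℂ) (i : Fin n) :
    hmApplyC hm (fun f => outAdj m H f + inAdj m H f) x i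
      = ∑ U ∈ H.edges.image (fun e => e.1 ∪ e.2), if i ∈ U then ∏ v ∈ U.erase i, x v else 0 := by
  rw [sum_image H.union_injective, hmApplyC_add]
  change hmApplyC hm (fun f => ∑ e ∈ H.edges, blockHM m #e.1 e.1 e.2 _ f) x i
    + hmApplyC hm (fun f => ∑ e ∈ H.edges, blockHM m (m - #e.1) e.2 e.1 _ f) x i = _
  rw [hmApplyC_sum, hmApplyC_sum, ← sum_add_distrib]
  refine sum_congr rfl fun e he => ?_
  have hd := H.tail_head_disjoint e he
  have htail := card_pos.mpr (H.tail_nonempty e he)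
  have hhead := card_pos.mpr (H.head_nonempty e he)
  have hcard : #e.1 + #e.2 = m := (card_union_of_disjoint hd).symm.trans (hu e he)
  rw [hmApplyC_blockHM hm htail (by omega) hd rfl (by omega),
    hmApplyC_blockHM hm (by omega) (by omega) hd.symm (by omega) (by omega),
    Nat.sub_sub_self (by omega : #e.1 ≤ m), union_comm e.2 e.1, Nat.mul_comm (#e.1 - 1).factorial,
    ofReal_one_div_natCast_mul_natCast (by positivity),
    ofReal_one_div_natCast_mul_natCast (by positivity), one_mul]
  by_cases hi : i ∈ e.1
  · simp [hi, disjoint_left.mp hd hi]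
  · simp [hi]

/-- Two directed `m`-uniform hypergraphs on the same vertex
set having the same underlying undirected hypergraph have isospectral
adjacency hypermatrices `A_{H₁} = A_{H₁}⁺ + A_{H₁}⁻` and
`A_{H₂} = A_{H₂}⁺ + A_{H₂}⁻`. -/
theorem same_underlying_isospectral {m n : ℕ} (hm : 0 < m)
    (H₁ H₂ : DirHypergraph n) (h₁ : H₁.IsUniform m) (h₂ : H₂.IsUniform m)
    (hsame : H₁.edges.image (fun e => e.1 ∪ e.2) =
      H₂.edges.image (fun e => e.1 ∪ e.2)) :
    ∀ lam : ℂ,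
      IsEigenvalue hm (fun f => outAdj m H₁ f + inAdj m H₁ f) lam ↔
        IsEigenvalue hm (fun f => outAdj m H₂ f + inAdj m H₂ f) lam := by
  have happly : hmApplyC hm (fun f => outAdj m H₁ f + inAdj m H₁ f)
      = hmApplyC hm (fun f => outAdj m H₂ f + inAdj m H₂ f) := by
    ext x i
    rw [hmApplyC_outAdj_add_inAdj hm h₁, hmApplyC_outAdj_add_inAdj hm h₂, hsame]
  intro lam
  simp only [IsEigenvalue, happly]
end

section
/- Let H be a directed hypergraph on n vertices with m.c.e(H) = m and out-Laplacian hypermatrix L_H⁺ = D_H⁺ − A_H⁺. Then: (i) 0 is an H-eigenvalue of L_H⁺, with the all-ones vector as eigenvector, and 0 is also a Z-eigenvalue of L_H⁺ (with eigenvector the normalized all-ones vector); (ii) ρ(L_H⁺) ≤ 2Δ⁺. -/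
open Finset

variable {n : ℕ}

/-!
The off-diagonal entries of `L_H⁺` are `-A_H⁺ ≤ 0`, so `|L_H⁺| ≤ D_H⁺ + A_H⁺` entrywise, and a
Gershgorin argument at a coordinate of maximal modulus of an eigenvector bounds every eigenvalue
by the largest absolute row sum. Everything therefore reduces to the row sums of `A_H⁺`: the `i`-th
one equals `d_i⁺`. For an edge with tail `T`, `|T| = k`, the index tuples carrying the edge number
exactly `α`, since tuples whose first block runs over `T` and second block over the head are pairs
of surjections, counted by sums of multinomial coefficients. Swapping two tail vertices shows that
a fraction `1/k` of these tuples start with any given tail vertex, so with weight `k/α` every edge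
contributes `1` to the row of each of its tail vertices. Hence `L_H⁺` has zero row sums, which
gives the eigenpairs at constant vectors, and absolute row sums at most `2 d_i⁺ ≤ 2Δ⁺`.
-/

noncomputable def rowSum {m n : ℕ} (hm : 0 < m) (A : (Fin m → Fin n) → ℝ) (i : Fin n) : ℝ :=
  ∑ f ∈ univ.filter (fun f : Fin m → Fin n => f ⟨0, hm⟩ = i), A f

section Hypermatrix

variable {m n : ℕ} (hm : 0 < m)

lemma card_filter_ne_zero : (univ.filter fun j : Fin m => j ≠ ⟨0, hm⟩).card = m - 1 := by
  rw [filter_ne', card_erase_of_mem (mem_univ _), card_univ, Fintype.card_fin]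

lemma hmApply_const (A : (Fin m → Fin n) → ℝ) (c : ℝ) (i : Fin n) :
    hmApply hm A (fun _ => c) i = rowSum hm A i * c ^ (m - 1) := by
  simp only [hmApply, rowSum, prod_const, card_filter_ne_zero, sum_mul]

lemma rowSum_add (A B : (Fin m → Fin n) → ℝ) (i : Fin n) :
    rowSum hm (fun f => A f + B f) i = rowSum hm A i + rowSum hm B i :=
  sum_add_distrib

lemma rowSum_sub (A B : (Fin m → Fin n) → ℝ) (i : Fin n) :
    rowSum hm (fun f => A f - B f) i = rowSum hm A i - rowSum hm B i :=
  sum_sub_distrib ..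

lemma rowSum_diagHM (d : Fin n → ℝ) (i : Fin n) : rowSum hm (diagHM m d) i = d i := by
  simp only [rowSum, diagHM]
  rw [sum_comm, Fintype.sum_eq_single i]
  · rw [sum_ite_eq' _ (fun _ => i)]
    simp
  · intro v hv
    refine sum_eq_zero fun f hf => if_neg ?_
    rintro rfl
    exact hv (mem_filter.mp hf).2

lemma exists_norm_le_rowSum_abs {A : (Fin m → Fin n) → ℝ} {lam : ℂ}
    (hlam : IsEigenvalue hm A lam) : ∃ i, ‖lam‖ ≤ rowSum hm (fun f => |A f|) i := by
  obtain ⟨x, hx0, hx⟩ := hlam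
  obtain ⟨j, hj⟩ := Function.ne_iff.mp hx0
  have : Nonempty (Fin n) := ⟨j⟩
  obtain ⟨i, hi⟩ := Finite.exists_max fun j => ‖x j‖
  have hM : 0 < ‖x i‖ := (norm_pos_iff.mpr hj).trans_le (hi j)
  refine ⟨i, le_of_mul_le_mul_right ?_ (pow_pos hM (m - 1))⟩
  calc ‖lam‖ * ‖x i‖ ^ (m - 1) = ‖hmApplyC hm A x i‖ := by rw [hx, norm_mul, norm_pow]
    _ ≤ ∑ f ∈ univ.filter (fun f : Fin m → Fin n => f ⟨0, hm⟩ = i),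
          |A f| * ‖x i‖ ^ (m - 1) := by
      refine (norm_sum_le _ _).trans (sum_le_sum fun f _ => ?_)
      rw [norm_mul, Complex.norm_real, Real.norm_eq_abs, norm_prod, ← card_filter_ne_zero hm,
        ← prod_const]
      gcongr with j
      exact hi _
    _ = rowSum hm (fun f => |A f|) i * ‖x i‖ ^ (m - 1) := by rw [rowSum, sum_mul]

lemma specRad_le_of_rowSum_abs_le {A : (Fin m → Fin n) → ℝ} {r : ℝ} (hr : 0 ≤ r)
    (hA : ∀ i, rowSum hm (fun f => |A f|) i ≤ r) : specRad hm A ≤ r := by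
  refine Real.sSup_le ?_ hr
  rintro _ ⟨lam, hlam, rfl⟩
  obtain ⟨i, hi⟩ := exists_norm_le_rowSum_abs hm hlam
  exact hi.trans (hA i)

end Hypermatrix

section Counting

variable {β γ : Type*} [Fintype γ] [DecidableEq γ]

lemma card_filter_restrict_and_restrict [Fintype β] (p : γ → Prop) [DecidablePred p]
    (q₁ : ({x // p x} → β) → Prop) [DecidablePred q₁]
    (q₂ : ({x // ¬ p x} → β) → Prop) [DecidablePred q₂] :
    (univ.filter fun g : γ → β => q₁ (fun x => g x) ∧ q₂ (fun x => g x)).card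
      = (univ.filter q₁).card * (univ.filter q₂).card := by
  rw [← card_product]
  exact card_equiv (Equiv.piEquivPiSubtypeProd p fun _ => β) fun g => by simp

lemma card_filter_subtype_notMem [DecidableEq β] {T : Finset γ} (g : γ → β) {b : β}
    (hb : ∀ x ∈ T, g x ≠ b) :
    (univ.filter fun x : {x // x ∉ T} => g x = b).card = (univ.filter fun x => g x = b).card :=
  card_bij (fun x _ => x.1) (by simp) (fun _ _ _ _ => Subtype.ext)
    fun x hx => ⟨⟨x, fun hxT => hb x hxT (mem_filter.mp hx).2⟩, by simpa using hx, rfl⟩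

/-- Maps with fibre `T` over `a` are determined by their restriction to the complement of `T`. -/
lemma card_filter_fiber_card_cons [Fintype β] [DecidableEq β] {a : β} {S : Finset β}
    (ha : a ∉ S) (c : β → ℕ) {T : Finset γ} (hT : T.card = c a) :
    (univ.filter fun g : γ → β =>
        ((∀ x, g x ∈ S.cons a ha) ∧
          ∀ b ∈ S.cons a ha, (univ.filter fun x => g x = b).card = c b) ∧
        univ.filter (fun x => g x = a) = T).card
      = (univ.filter fun g : {x // x ∉ T} → β =>
        (∀ x, g x ∈ S) ∧ ∀ b ∈ S, (univ.filter fun x => g x = b).card = c b).card := by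
  have hsplit := card_filter_restrict_and_restrict (β := β) (· ∈ T)
    (fun g => g = fun _ => a)
    (fun g => (∀ x, g x ∈ S) ∧ ∀ b ∈ S, (univ.filter fun x => g x = b).card = c b)
  simp only [filter_eq', mem_univ, if_true, card_singleton, one_mul] at hsplit
  rw [← hsplit]
  congr 1
  refine filter_congr fun g _ => ?_
  have hne : ∀ b ∈ S, ∀ x, g x = a → g x ≠ b := fun b hb x hx hxb => ha (hx ▸ hxb ▸ hb)
  constructor
  · rintro ⟨⟨hmem, hcard⟩, hfa⟩
    have hgT : ∀ x, g x = a ↔ x ∈ T := fun x => by simp [← hfa]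
    refine ⟨funext fun x => (hgT x).2 x.2, fun x => ?_, fun b hb => ?_⟩
    · exact (mem_cons.mp (hmem x)).resolve_left (mt (hgT x).1 x.2)
    · rw [card_filter_subtype_notMem g fun x hx => hne b hb x ((hgT x).2 hx)]
      exact hcard b (mem_cons_of_mem hb)
  · rintro ⟨hconst, hmem, hcard⟩
    have hgT : ∀ x, g x = a ↔ x ∈ T := fun x =>
      ⟨fun hx => by_contra fun hxT => ha (hx ▸ hmem ⟨x, hxT⟩), fun hx => congrFun hconst ⟨x, hx⟩⟩
    have hfa : univ.filter (fun x => g x = a) = T := by ext x; simp [hgT]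
    refine ⟨⟨fun x => ?_, fun b hb => ?_⟩, hfa⟩
    · by_cases hx : x ∈ T
      · simp [(hgT x).2 hx]
      · exact mem_cons_of_mem (hmem ⟨x, hx⟩)
    · rcases mem_cons.mp hb with rfl | hb
      · rw [hfa, hT]
      · rw [← card_filter_subtype_notMem g fun x hx => hne b hb x ((hgT x).2 hx), hcard b hb]

lemma card_filter_fiber_card_eq_multinomial [Fintype β] [DecidableEq β] (S : Finset β)
    (c : β → ℕ) (hγ : Fintype.card γ = ∑ b ∈ S, c b) :
    (univ.filter fun g : γ → β =>
        (∀ x, g x ∈ S) ∧ ∀ b ∈ S, (univ.filter fun x => g x = b).card = c b).card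
      = Nat.multinomial S c := by
  induction S using Finset.cons_induction generalizing γ with
  | empty =>
    have : IsEmpty γ := Fintype.card_eq_zero_iff.mp (by simpa using hγ)
    simp [filter_true_of_mem]
  | cons a S ha ih =>
    rw [sum_cons] at hγ
    rw [card_eq_sum_card_fiberwise (f := fun g : γ → β => univ.filter fun x => g x = a)
      (t := powersetCard (c a) univ) fun g hg => by simpa using (mem_filter.mp hg).2.2 a (by simp)]
    have hfib : ∀ T ∈ powersetCard (c a) (univ : Finset γ),
        ((univ.filter fun g : γ → β => (∀ x, g x ∈ S.cons a ha) ∧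
          ∀ b ∈ S.cons a ha, (univ.filter fun x => g x = b).card = c b).filter
            fun g => univ.filter (fun x => g x = a) = T).card = Nat.multinomial S c := fun T hT => by
      rw [filter_filter, card_filter_fiber_card_cons ha c (mem_powersetCard_univ.mp hT)]
      refine ih ?_
      rw [Fintype.card_subtype_compl, Fintype.card_coe, mem_powersetCard_univ.mp hT, hγ]
      omega
    rw [sum_congr rfl hfib, sum_const, card_powersetCard, card_univ, hγ, smul_eq_mul,
      Nat.multinomial_cons]

lemma card_filter_surjective_eq_sum_multinomial (k : ℕ) :
    (univ.filter fun g : γ → Fin k => Function.Surjective g).card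
      = ∑ c ∈ (Nat.antidiagonalTuple k (Fintype.card γ)).filter (fun c => ∀ i, 1 ≤ c i),
          Nat.multinomial univ c := by
  have hmaps : ∀ g ∈ univ.filter fun g : γ → Fin k => Function.Surjective g,
      (fun j => (univ.filter fun x => g x = j).card) ∈
        (Nat.antidiagonalTuple k (Fintype.card γ)).filter (fun c => ∀ i, 1 ≤ c i) := by
    intro g hg
    refine mem_filter.mpr ⟨?_, fun j => ?_⟩
    · rw [Nat.mem_antidiagonalTuple, ← card_univ, card_eq_sum_card_fiberwise (f := g)
        (t := univ) (by simp)]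
    · obtain ⟨x, hx⟩ := (mem_filter.mp hg).2 j
      exact card_pos.mpr ⟨x, by simpa using hx⟩
  rw [card_eq_sum_card_fiberwise hmaps]
  refine sum_congr rfl fun c hc => ?_
  obtain ⟨hsum, hpos⟩ := mem_filter.mp hc
  rw [filter_filter]
  convert card_filter_fiber_card_eq_multinomial univ c
    (by simpa using (Nat.mem_antidiagonalTuple.mp hsum).symm) using 2
  ext g
  simp only [mem_filter, mem_univ, true_and, funext_iff, implies_true, forall_const]
  refine ⟨And.right, fun hg => ⟨fun j => ?_, hg⟩⟩
  obtain ⟨x, hx⟩ := card_pos.mp ((hpos j).trans_eq (hg j).symm)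
  exact ⟨x, (mem_filter.mp hx).2⟩

lemma card_filter_image_eq [Fintype β] [DecidableEq β] (S : Finset β) :
    (univ.filter fun g : γ → β => univ.image g = S).card
      = (univ.filter fun g : γ → Fin S.card => Function.Surjective g).card := by
  symm
  refine card_bij (fun g _ x => (S.equivFin.symm (g x) : β)) (fun g hg => ?_)
    (fun g₁ _ g₂ _ h => ?_) (fun g hg => ?_)
  · refine mem_filter.mpr ⟨mem_univ _, Finset.ext fun b => ⟨fun hb => ?_, fun hb => ?_⟩⟩
    · obtain ⟨x, -, rfl⟩ := mem_image.mp hb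
      exact coe_mem _
    · obtain ⟨x, hx⟩ := (mem_filter.mp hg).2 (S.equivFin ⟨b, hb⟩)
      exact mem_image.mpr ⟨x, mem_univ _, by simp [hx]⟩
  · funext x
    exact S.equivFin.symm.injective (Subtype.ext (congrFun h x))
  · have himg := (mem_filter.mp hg).2
    have hgS : ∀ x, g x ∈ S := fun x => himg ▸ mem_image_of_mem g (mem_univ x)
    refine ⟨fun x => S.equivFin ⟨g x, hgS x⟩, mem_filter.mpr ⟨mem_univ _, fun j => ?_⟩, by simp⟩
    have hj : (S.equivFin.symm j : β) ∈ univ.image g := himg ▸ (S.equivFin.symm j).2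
    obtain ⟨x, -, hx⟩ := mem_image.mp hj
    exact ⟨x, by simp [hx]⟩

lemma image_filter_eq_image_subtype {α β : Type*} [Fintype α] [DecidableEq β]
    (p : α → Prop) [DecidablePred p] (f : α → β) :
    (univ.filter p).image f = univ.image fun x : {x // p x} => f x := by
  ext; simp

end Counting

lemma sum_multinomial_pos {k N : ℕ} (hk : 1 ≤ k) (hkN : k ≤ N) :
    0 < ∑ c ∈ (Nat.antidiagonalTuple k N).filter (fun c => ∀ i, 1 ≤ c i),
      Nat.multinomial univ c := by
  have : Nonempty (Fin k) := ⟨⟨0, hk⟩⟩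
  rw [← Fintype.card_fin N, ← card_filter_surjective_eq_sum_multinomial]
  exact card_pos.mpr ⟨_, mem_filter.mpr
    ⟨mem_univ _, Function.invFun_surjective (Fin.castLE_injective hkN)⟩⟩

lemma alphaVal_pos {m k s : ℕ} (hk : 1 ≤ k) (hks : k < s) (hsm : s ≤ m) :
    0 < alphaVal m k s :=
  sum_pos' (fun _ _ => Nat.zero_le _) ⟨0, by simp,
    mul_pos (sum_multinomial_pos hk (by omega)) (sum_multinomial_pos (by omega) (by omega))⟩

lemma Finset.image_perm_eq_self {α : Type*} [DecidableEq α] {σ : Equiv.Perm α} {S : Finset α}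
    (h : ∀ x, σ x ∈ S ↔ x ∈ S) : S.image σ = S := by
  ext x
  rw [mem_image]
  exact ⟨fun ⟨y, hy, hyx⟩ => hyx ▸ (h y).2 hy,
    fun hx => ⟨σ.symm x, (h _).1 (by simpa using hx), by simp⟩⟩

lemma Equiv.swap_apply_mem_iff {α : Type*} [DecidableEq α] {a b x : α} {S : Finset α}
    (hab : a ∈ S ↔ b ∈ S) : Equiv.swap a b x ∈ S ↔ x ∈ S := by
  rw [Equiv.swap_apply_def]
  split_ifs with hxa hxb
  · rw [hxa, hab]
  · rw [hxb, hab]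
  · rfl

/-- The support of the `t`-th summand of the edge `(T, Hd)` in `outAdjNU`. -/
def blockPattern (m t : ℕ) (T Hd : Finset (Fin n)) : Finset (Fin m → Fin n) :=
  univ.filter fun f => (univ.filter fun j : Fin m => (j : ℕ) < t).image f = T ∧
    (univ.filter fun j : Fin m => t ≤ (j : ℕ)).image f = Hd

section BlockPattern

variable {m n t : ℕ} {T Hd : Finset (Fin n)}

lemma mem_blockPattern {f : Fin m → Fin n} :
    f ∈ blockPattern m t T Hd ↔ (univ.filter fun j : Fin m => (j : ℕ) < t).image f = T ∧
      (univ.filter fun j : Fin m => t ≤ (j : ℕ)).image f = Hd := by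
  simp [blockPattern]

lemma card_blockPattern (ht : t ≤ m) :
    (blockPattern m t T Hd).card
      = (∑ c ∈ (Nat.antidiagonalTuple T.card t).filter (fun c => ∀ i, 1 ≤ c i),
          Nat.multinomial univ c) *
        (∑ c ∈ (Nat.antidiagonalTuple Hd.card (m - t)).filter (fun c => ∀ i, 1 ≤ c i),
          Nat.multinomial univ c) := by
  have hhead : ∀ f : Fin m → Fin n, (univ.filter fun j : Fin m => t ≤ (j : ℕ)).image f
      = univ.image fun x : {j : Fin m // ¬ (j : ℕ) < t} => f x := fun f => by
    simp only [← not_lt, image_filter_eq_image_subtype]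
  have hcard_tail : Fintype.card {j : Fin m // (j : ℕ) < t} = t := Fintype.card_fin_lt_of_le ht
  have hcard_head : Fintype.card {j : Fin m // ¬ (j : ℕ) < t} = m - t := by
    rw [Fintype.card_subtype_compl, hcard_tail, Fintype.card_fin]
  simp only [blockPattern, hhead, image_filter_eq_image_subtype]
  rw [card_filter_restrict_and_restrict (fun j : Fin m => (j : ℕ) < t)
      (fun g => univ.image g = T) (fun g => univ.image g = Hd),
    card_filter_image_eq, card_filter_image_eq, card_filter_surjective_eq_sum_multinomial,
    card_filter_surjective_eq_sum_multinomial, hcard_tail, hcard_head]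

lemma sum_card_blockPattern (hs : T.card + Hd.card ≤ m) :
    ∑ t ∈ Icc T.card (m - (T.card + Hd.card) + T.card), (blockPattern m t T Hd).card
      = alphaVal m T.card (T.card + Hd.card) := by
  rw [← Finset.Ico_add_one_right_eq_Icc, sum_Ico_eq_sum_range, alphaVal,
    show m - (T.card + Hd.card) + T.card + 1 - T.card = m - (T.card + Hd.card) + 1 by omega]
  refine sum_congr rfl fun r hr => ?_
  rw [mem_range] at hr
  rw [card_blockPattern (by omega), add_comm T.card r,
    show m - (r + T.card) = m - T.card - r by omega, Nat.add_sub_cancel_left]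

lemma comp_mem_blockPattern {σ : Equiv.Perm (Fin n)} (hT : ∀ x, σ x ∈ T ↔ x ∈ T)
    (hHd : ∀ x, σ x ∈ Hd ↔ x ∈ Hd) {f : Fin m → Fin n} (hf : f ∈ blockPattern m t T Hd) :
    σ ∘ f ∈ blockPattern m t T Hd := by
  rw [mem_blockPattern] at hf ⊢
  rw [← image_image, ← image_image, hf.1, hf.2]
  exact ⟨Finset.image_perm_eq_self hT, Finset.image_perm_eq_self hHd⟩

lemma card_filter_blockPattern_apply_eq (hdisj : Disjoint T Hd) (j : Fin m) {a b : Fin n}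
    (ha : a ∈ T) (hb : b ∈ T) :
    ((blockPattern m t T Hd).filter fun f => f j = a).card
      = ((blockPattern m t T Hd).filter fun f => f j = b).card := by
  have hT : ∀ x, Equiv.swap a b x ∈ T ↔ x ∈ T := fun _ => Equiv.swap_apply_mem_iff (by tauto)
  have hHd : ∀ x, Equiv.swap a b x ∈ Hd ↔ x ∈ Hd := fun _ => Equiv.swap_apply_mem_iff
    (iff_of_false (disjoint_left.mp hdisj ha) (disjoint_left.mp hdisj hb))
  refine card_nbij' (Equiv.swap a b ∘ ·) (Equiv.swap a b ∘ ·) ?_ ?_ ?_ ?_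
  · intro f hf
    simp only [coe_filter] at hf ⊢
    exact ⟨comp_mem_blockPattern hT hHd hf.1, by simp [hf.2]⟩
  · intro f hf
    simp only [coe_filter] at hf ⊢
    exact ⟨comp_mem_blockPattern hT hHd hf.1, by simp [hf.2]⟩
  · intro f _
    simp [Function.comp_def]
  · intro f _
    simp [Function.comp_def]

lemma card_blockPattern_eq_card_mul (hdisj : Disjoint T Hd) {j : Fin m} (hj : (j : ℕ) < t)
    {a : Fin n} (ha : a ∈ T) :
    (blockPattern m t T Hd).card
      = T.card * ((blockPattern m t T Hd).filter fun f => f j = a).card := by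
  have hmaps : ∀ f ∈ blockPattern m t T Hd, f j ∈ T := fun f hf =>
    (mem_blockPattern.mp hf).1 ▸ mem_image_of_mem f (by simpa using hj)
  rw [card_eq_sum_card_fiberwise hmaps,
    sum_congr rfl fun b hb => card_filter_blockPattern_apply_eq hdisj j hb ha, sum_const,
    smul_eq_mul]

lemma sum_blockPattern_weight (hm : 0 < m) (hT : T.Nonempty) (hHd : Hd.Nonempty)
    (hdisj : Disjoint T Hd) (hs : T.card + Hd.card ≤ m) (i : Fin n) :
    ∑ f ∈ univ.filter (fun f : Fin m → Fin n => f ⟨0, hm⟩ = i),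
      ∑ t ∈ Icc T.card (m - (T.card + Hd.card) + T.card),
        (if f ∈ blockPattern m t T Hd
          then (T.card : ℝ) / (alphaVal m T.card (T.card + Hd.card) : ℝ) else 0)
      = if i ∈ T then 1 else 0 := by
  have hk : 1 ≤ T.card := card_pos.mpr hT
  have hα : (alphaVal m T.card (T.card + Hd.card) : ℝ) ≠ 0 := Nat.cast_ne_zero.mpr
    (alphaVal_pos hk (by simpa using card_pos.mpr hHd) hs).ne'
  have hrow : ∀ t, ∑ f ∈ univ.filter (fun f : Fin m → Fin n => f ⟨0, hm⟩ = i),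
      (if f ∈ blockPattern m t T Hd
        then (T.card : ℝ) / (alphaVal m T.card (T.card + Hd.card) : ℝ) else 0)
      = ((blockPattern m t T Hd).filter fun f => f ⟨0, hm⟩ = i).card
          * ((T.card : ℝ) / (alphaVal m T.card (T.card + Hd.card) : ℝ)) := fun t => by
    rw [sum_ite_mem, sum_const, nsmul_eq_mul, filter_inter, univ_inter]
  rw [sum_comm, sum_congr rfl fun t _ => hrow t, ← sum_mul]
  split_ifs with hi
  · have hcount : ∑ t ∈ Icc T.card (m - (T.card + Hd.card) + T.card),
        (((blockPattern m t T Hd).filter fun f => f ⟨0, hm⟩ = i).card : ℝ) * T.card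
          = alphaVal m T.card (T.card + Hd.card) := by
      rw [← sum_card_blockPattern hs, Nat.cast_sum]
      refine sum_congr rfl fun t ht => ?_
      rw [card_blockPattern_eq_card_mul hdisj (j := ⟨0, hm⟩)
        (show 0 < t by rw [mem_Icc] at ht; omega) hi]
      push_cast
      ring
    rw [← mul_div_assoc, sum_mul, hcount, div_self hα]
  · refine mul_eq_zero_of_left (sum_eq_zero fun t ht => ?_) _
    rw [Nat.cast_eq_zero, card_eq_zero, filter_eq_empty_iff]
    intro f hf hfi
    refine hi (hfi ▸ (mem_blockPattern.mp hf).1 ▸ mem_image_of_mem f ?_)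
    rw [mem_Icc] at ht
    simpa using show 0 < t by omega

end BlockPattern

lemma rowSum_outAdjNU {m n : ℕ} (hm : 0 < m) {H : DirHypergraph n}
    (hH : ∀ e ∈ H.edges, (e.1 ∪ e.2).card ≤ m) (i : Fin n) :
    rowSum hm (outAdjNU m H) i = outDeg H i := by
  simp only [rowSum, outAdjNU, ← mem_blockPattern]
  rw [sum_comm, sum_congr rfl fun e he => sum_blockPattern_weight hm (H.tail_nonempty e he)
    (H.head_nonempty e he) (H.tail_head_disjoint e he)
    ((card_union_of_disjoint (H.tail_head_disjoint e he)).symm.trans_le (hH e he)) i,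
    sum_boole]
  rfl

lemma rowSum_outLaplacian {m n : ℕ} (hm : 0 < m) {H : DirHypergraph n}
    (hH : ∀ e ∈ H.edges, (e.1 ∪ e.2).card ≤ m) (i : Fin n) :
    rowSum hm (fun f => diagHM m (fun v => (outDeg H v : ℝ)) f - outAdjNU m H f) i = 0 := by
  rw [rowSum_sub, rowSum_diagHM, rowSum_outAdjNU hm hH, sub_self]

lemma rowSum_abs_outLaplacian_le {m n : ℕ} (hm : 0 < m) {H : DirHypergraph n}
    (hH : ∀ e ∈ H.edges, (e.1 ∪ e.2).card ≤ m) (i : Fin n) :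
    rowSum hm (fun f => |diagHM m (fun v => (outDeg H v : ℝ)) f - outAdjNU m H f|) i
      ≤ 2 * outDeg H i := by
  have hD : ∀ f, 0 ≤ diagHM m (fun v => (outDeg H v : ℝ)) f := fun f =>
    sum_nonneg fun v _ => by split_ifs <;> positivity
  have hA : ∀ f, 0 ≤ outAdjNU m H f := fun f =>
    sum_nonneg fun e _ => sum_nonneg fun t _ => by split_ifs <;> positivity
  calc rowSum hm (fun f => |diagHM m (fun v => (outDeg H v : ℝ)) f - outAdjNU m H f|) i
      ≤ rowSum hm (fun f => diagHM m (fun v => (outDeg H v : ℝ)) f + outAdjNU m H f) i :=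
        sum_le_sum fun f _ => abs_sub_le_iff.mpr ⟨by linarith [hA f], by linarith [hD f]⟩
    _ = 2 * outDeg H i := by
        rw [rowSum_add, rowSum_diagHM, rowSum_outAdjNU hm hH]
        ring

/-- For a directed hypergraph `H` with `m.c.e.(H) = m` and
out-Laplacian `L_H⁺ = D_H⁺ - A_H⁺`:  (i) `0` is an H-eigenvalue of `L_H⁺`
with the all-ones eigenvector, and `0` is a Z-eigenvalue with the normalized
all-ones eigenvector;  (ii) `ρ(L_H⁺) ≤ 2Δ⁺`. -/
theorem outLaplacian_basic {m n : ℕ} (hm : 0 < m) (hn : 0 < n)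
    (H : DirHypergraph n) (hmce : H.mce m) :
    (IsHEigenpair hm
        (fun f => diagHM m (fun v => (outDeg H v : ℝ)) f - outAdjNU m H f) 0
        (fun _ => 1) ∧
      IsZEigenpair hm
        (fun f => diagHM m (fun v => (outDeg H v : ℝ)) f - outAdjNU m H f) 0
        (fun _ => (Real.sqrt n)⁻¹)) ∧
    specRad hm (fun f => diagHM m (fun v => (outDeg H v : ℝ)) f - outAdjNU m H f) ≤
      2 * maxOutDeg H := by
  have hdeg_le : ∀ v, (outDeg H v : ℝ) ≤ maxOutDeg H := fun v =>
    le_csSup (Set.finite_range _).bddAbove ⟨v, rfl⟩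
  refine ⟨⟨⟨fun h => one_ne_zero (congrFun h ⟨0, hn⟩), fun i => ?_⟩, fun i => ?_, ?_⟩, ?_⟩
  · rw [hmApply_const, rowSum_outLaplacian hm hmce.1, zero_mul]
  · rw [hmApply_const, rowSum_outLaplacian hm hmce.1, zero_mul, zero_mul]
  · have hn' : (0 : ℝ) < n := Nat.cast_pos.mpr hn
    simp [inv_pow, Real.sq_sqrt hn'.le, hn'.ne']
  · refine specRad_le_of_rowSum_abs_le hm ?_ fun i =>
      (rowSum_abs_outLaplacian_le hm hmce.1 i).trans (by linarith [hdeg_le i])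
    linarith [hdeg_le ⟨0, hn⟩, (outDeg H ⟨0, hn⟩).cast_nonneg (α := ℝ)]
end
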